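/- arXiv:1103.0067 — 2 statements merged into one kernel-verified Lean document; each statement's English description precedes it below -/
import Mathlib

section
/- If G is a connected C_k-semisaturated graph on n ≥ k vertices with minimum degree at least 2 and k ≥ 5, then every vertex of G lies on a cycle of length at most k+1. -/
open SimpleGraph

/-- `G` contains a cycle of length `k`. -/
def hasCycleLength {V : Type*} (G : SimpleGraph V) (k : ℕ) : Prop :=
  ∃ (v : V) (c : G.Walk v v), c.IsCycle ∧ c.length = k

/-- The graph `G` together with the extra edge `uv`. -/
def addEdge {V : Type*} (G : SimpleGraph V) (u v : V) : SimpleGraph V :=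
  G ⊔ SimpleGraph.fromEdgeSet {s(u, v)}

/-- `G` is `C_k`-semisaturated: adding any non-edge `uv` creates a new `k`-cycle,
i.e. a `k`-cycle through the edge `uv`. -/
def IsCkSemisaturated {V : Type*} (k : ℕ) (G : SimpleGraph V) : Prop :=
  ∀ u v : V, u ≠ v → ¬ G.Adj u v →
    ∃ (w : V) (c : (addEdge G u v).Walk w w),
      c.IsCycle ∧ c.length = k ∧ s(u, v) ∈ c.edges

/-- `G` is `C_k`-saturated: it has no `k`-cycle, but adding any non-edge creates one. -/
def IsCkSaturated {V : Type*} (k : ℕ) (G : SimpleGraph V) : Prop :=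
  ¬ hasCycleLength G k ∧
    ∀ u v : V, u ≠ v → ¬ G.Adj u v → hasCycleLength (addEdge G u v) k

/-
Let `a ≠ b` be neighbours of `w`. If `ab` is an edge, `wab` is a triangle. Otherwise
semisaturation yields a `k`-cycle through `ab` in `G + ab`, i.e. an `a`–`b` path `r` of length
`k - 1` in `G`. If `w` is off `r`, then `w a ⋯ b w` is a `(k + 1)`-cycle. If `w` lies on `r`, one
of the two arcs of `r` between `w` and an end has length at least 2, and the edge from that end
back to `w` closes it into a cycle of length at most `k - 1`.
-/

namespace SimpleGraph

variable {V : Type*} {G : SimpleGraph V}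

namespace Walk

lemma IsPath.isCycle_cons {u v : V} {p : G.Walk v u} (hp : p.IsPath) (h : G.Adj u v)
    (hl : p.length ≠ 1) : (cons h p).IsCycle :=
  (cons_isCycle_iff p h).2
    ⟨hp, fun he => hl (hp.length_eq_one_of_mem_edges (Sym2.eq_swap ▸ he))⟩

lemma IsCycle.exists_isPath_of_mem_edges {x u v : V} {c : G.Walk x x} (hc : c.IsCycle)
    (he : s(u, v) ∈ c.edges) :
    ∃ p : G.Walk u v, p.IsPath ∧ s(u, v) ∉ p.edges ∧ p.length + 1 = c.length := by
  classical
  have hu := c.fst_mem_support_of_mem_edges he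
  set c' := c.rotate u hu
  have hc' : c'.IsCycle := hc.rotate hu
  have he' : s(u, v) ∈ c'.edges := (c.rotate_edges u hu).mem_iff.2 he
  have hv := c'.snd_mem_support_of_mem_edges he'
  have huv : u ≠ v := (c'.adj_of_mem_edges he').ne
  set p := c'.takeUntil v hv
  set q := c'.dropUntil v hv
  have hpq : p.append q = c' := c'.take_spec hv
  have hp : p.IsPath := hc'.isPath_takeUntil hv
  have hq : q.IsPath := (hpq ▸ hc').isPath_of_append_right (not_nil_of_ne huv)
  have hdisj := hc'.isTrail.disjoint_edges_takeUntil_dropUntil hv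
  have hlen : p.length + q.length = c.length := by
    rw [← length_append, hpq, length_rotate]
  rw [← hpq, edges_append, List.mem_append] at he'
  rcases he' with hep | heq
  · have := hp.length_eq_one_of_mem_edges hep
    refine ⟨q.reverse, hq.reverse, ?_, ?_⟩
    · rw [edges_reverse, List.mem_reverse]
      exact hdisj hep
    · rw [length_reverse]; omega
  · have := hq.length_eq_one_of_mem_edges (Sym2.eq_swap ▸ heq)
    exact ⟨p, hp, fun hep => hdisj hep heq, by omega⟩

lemma IsPath.isCycle_cons_concat {w a b : V} {r : G.Walk a b} (hr : r.IsPath)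
    (hab : a ≠ b) (hwa : G.Adj w a) (hbw : G.Adj b w) (hw : w ∉ r.support) :
    (cons hwa (r.concat hbw)).IsCycle := by
  refine (hr.concat hw hbw).isCycle_cons hwa ?_
  have := not_nil_iff_lt_length.1 (not_nil_of_ne (p := r) hab)
  rw [length_concat]; omega

lemma IsPath.exists_isCycle_length_le_of_mem_support {w a b : V} {r : G.Walk a b} (hr : r.IsPath)
    (hr3 : 3 ≤ r.length) (hwa : G.Adj w a) (hwb : G.Adj w b) (hw : w ∈ r.support) :
    ∃ (v : V) (c : G.Walk v v), c.IsCycle ∧ c.length ≤ r.length ∧ w ∈ c.support := by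
  classical
  set r₁ := r.takeUntil w hw
  set r₂ := r.dropUntil w hw
  have hlen : r₁.length + r₂.length = r.length := by
    rw [← length_append, r.take_spec hw]
  have h₂ : 0 < r₂.length := not_nil_iff_lt_length.1 (not_nil_of_ne hwb.ne)
  by_cases h₁ : r₁.length = 1
  · have h₂ : r₂.reverse.length ≠ 1 := by rw [length_reverse]; omega
    exact ⟨w, .cons hwb r₂.reverse, (hr.dropUntil hw).reverse.isCycle_cons hwb h₂,
      by simp only [length_cons, length_reverse]; omega, by simp⟩
  · exact ⟨w, .cons hwa r₁, (hr.takeUntil hw).isCycle_cons hwa h₁,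
      by simp only [length_cons]; omega, by simp⟩

end Walk

lemma IsCkSemisaturated.exists_isPath {k : ℕ} (hG : IsCkSemisaturated k G) {u v : V}
    (huv : u ≠ v) (hnadj : ¬ G.Adj u v) : ∃ p : G.Walk u v, p.IsPath ∧ p.length + 1 = k := by
  obtain ⟨x, c, hc, hck, he⟩ := hG u v huv hnadj
  obtain ⟨p, hp, hpe, hpk⟩ := hc.exists_isPath_of_mem_edges he
  have hsub : ∀ e ∈ p.edges, e ∈ G.edgeSet := fun e he' => by
    have := p.edges_subset_edgeSet he'
    simp only [addEdge, edgeSet_sup, edgeSet_fromEdgeSet, Set.mem_union, Set.mem_sdiff,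
      Set.mem_singleton_iff] at this
    exact this.resolve_right fun h => hpe (h.1 ▸ he')
  exact ⟨p.transfer G hsub, hp.transfer hsub, by rw [Walk.length_transfer, hpk, hck]⟩

end SimpleGraph

theorem stmt_6_general {V : Type*} [Fintype V] (G : SimpleGraph V) [DecidableRel G.Adj]
    (k : ℕ) (hk : 5 ≤ k)
    (hmin : ∀ v : V, 2 ≤ G.degree v)
    (hsat : IsCkSemisaturated k G) (w : V) :
    ∃ (v : V) (c : G.Walk v v), c.IsCycle ∧ c.length ≤ k + 1 ∧ w ∈ c.support := by
  obtain ⟨a, ha, b, hb, hab⟩ := Finset.one_lt_card.mp (hmin w)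
  rw [mem_neighborFinset] at ha hb
  by_cases hGab : G.Adj a b
  · have hw : w ∉ (Adj.toWalk hGab).support := by simp [ha.ne, hb.ne]
    exact ⟨w, _, (Adj.isPath_toWalk hGab).isCycle_cons_concat hab ha hb.symm hw,
      by simp only [Walk.length_cons, Walk.length_concat, Walk.length_nil]; omega, by simp⟩
  obtain ⟨r, hr, hrk⟩ := hsat.exists_isPath hab hGab
  by_cases hw : w ∈ r.support
  · obtain ⟨v, c, hc, hcl, hwc⟩ :=
      hr.exists_isCycle_length_le_of_mem_support (by omega) ha hb hw
    exact ⟨v, c, hc, by omega, hwc⟩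
  · exact ⟨w, _, hr.isCycle_cons_concat hab ha hb.symm hw,
      by simp only [Walk.length_cons, Walk.length_concat]; omega, by simp⟩

theorem stmt_6 {V : Type*} [Fintype V] (G : SimpleGraph V) [DecidableRel G.Adj]
    (n k : ℕ) (hn : Fintype.card V = n) (hkn : k ≤ n) (hk : 5 ≤ k)
    (hconn : G.Connected) (hmin : ∀ v : V, 2 ≤ G.degree v)
    (hsat : IsCkSemisaturated k G) (w : V) :
    ∃ (v : V) (c : G.Walk v v), c.IsCycle ∧ c.length ≤ k + 1 ∧ w ∈ c.support :=
  stmt_6_general G k hk hmin hsat w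
end

section
/- In the graph H_{k,n} (k ≥ 7), the vertices a₁ and a₂ are connected inside Q = A ∪ B ∪ C ∪ D by a path of length ℓ for every ℓ ∈ {1, 2, 4, 5, ..., k−2}, i.e., for every 1 ≤ ℓ ≤ k−2 with ℓ ≠ 3. -/
open SimpleGraph

/-- Vertex set of the graph `H_{k,n}`: `A ⊕ B` (two vertices each) plus
`C ⊕ D` (`k-5` and `r` vertices) plus `R₁ ∪ ⋯ ∪ R_t` (`t` sets of `k-4` vertices). -/
abbrev HVtx (k r t : ℕ) : Type :=
  (Fin 2 ⊕ Fin 2) ⊕ ((Fin (k - 5) ⊕ Fin r) ⊕ (Fin t × Fin (k - 4)))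

/-- The vertices `a₁, a₂`. -/
def aVtx (k r t : ℕ) (i : Fin 2) : HVtx k r t := Sum.inl (Sum.inl i)

/-- Underlying (asymmetric) relation of `H_{k,n}`:
a complete graph on `B ∪ C` minus the edge `b₁b₂`, a `K₄` minus the edge `b₁b₂`
on `A ∪ B`, pendant edges `cᵢdᵢ`, and for each `α` a path
`a₁ r_{α,1} r_{α,2} ⋯ r_{α,k-4} a₂` of length `k-3`. -/
def HRel (k r t : ℕ) : HVtx k r t → HVtx k r t → Prop
  | .inl (.inl i), .inl (.inl j) => i ≠ j                       -- the edge a₁a₂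
  | .inl (.inl _), .inl (.inr _) => True                        -- all A–B edges
  | .inl (.inr _), .inr (.inl (.inl _)) => True                 -- all B–C edges
  | .inr (.inl (.inl i)), .inr (.inl (.inl j)) => i ≠ j         -- C is complete
  | .inr (.inl (.inl i)), .inr (.inl (.inr j)) => (i : ℕ) = (j : ℕ)  -- pendant cᵢdᵢ
  | .inl (.inl i), .inr (.inr (_, j)) =>
      ((i : ℕ) = 0 ∧ (j : ℕ) = 0) ∨ ((i : ℕ) = 1 ∧ (j : ℕ) = k - 5)  -- path ends
  | .inr (.inr (α, i)), .inr (.inr (β, j)) => α = β ∧ (j : ℕ) = (i : ℕ) + 1 -- path edges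
  | _, _ => False

/-- The `C_k`-saturated graph `H_{k,n}` of the paper, where
`n = (k-1) + r + t(k-4)`. -/
def Hgraph (k r t : ℕ) : SimpleGraph (HVtx k r t) :=
  SimpleGraph.fromRel (HRel k r t)

/-
The edge `a₁a₂` and the path `a₁b₁a₂` give the lengths 1 and 2. The set `{b₁} ∪ C` is a clique on
`k - 4` vertices, and any two vertices of a clique on `s` vertices are joined inside it by paths of
every length from 1 to `s - 1` (extend a shorter path through a fresh vertex of the clique). So for
`4 ≤ ℓ ≤ k - 2` a path `b₁ ⋯ c` of length `ℓ - 3` in that clique, with `c ∈ C`, extends to the path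
`a₁ b₁ ⋯ c b₂ a₂` of length `ℓ`, which never leaves `Q`.
-/

namespace SimpleGraph

variable {V : Type*} {G : SimpleGraph V}

theorem IsClique.exists_isPath_length [DecidableEq V] {s : Finset V}
    (hs : G.IsClique (s : Set V)) {m : ℕ} {u v : V} (hu : u ∈ s) (hv : v ∈ s) (huv : u ≠ v)
    (hm : 1 ≤ m) (hms : m < s.card) :
    ∃ p : G.Walk u v, p.IsPath ∧ p.length = m ∧ ∀ x ∈ p.support, x ∈ s := by
  induction m generalizing s u with
  | zero => omega
  | succ m ih =>
    obtain rfl | hm := Nat.eq_zero_or_pos m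
    · exact ⟨(hs hu hv huv).toWalk, .of_adj _, rfl, by simp [hu, hv]⟩
    have hcard : (s.erase u).card = s.card - 1 := Finset.card_erase_of_mem hu
    obtain ⟨w, hw, hwv⟩ := Finset.exists_mem_ne (s := s.erase u) (by omega) v
    obtain ⟨p, hp, hlen, hsupp⟩ := ih (hs.subset (Finset.coe_subset.2 (s.erase_subset u)))
      hw (Finset.mem_erase.2 ⟨huv.symm, hv⟩) hwv hm (by omega)
    refine ⟨.cons (hs hu (Finset.mem_of_mem_erase hw) (Finset.ne_of_mem_erase hw).symm) p,
      hp.cons fun h => Finset.notMem_erase u s (hsupp u h), by simp [hlen], ?_⟩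
    simp only [Walk.support_cons, List.mem_cons, forall_eq_or_imp]
    exact ⟨hu, fun x hx => Finset.mem_of_mem_erase (hsupp x hx)⟩

end SimpleGraph

def bVtx (k r t : ℕ) (i : Fin 2) : HVtx k r t := Sum.inl (Sum.inr i)

def cVtx (k r t : ℕ) : Fin (k - 5) ↪ HVtx k r t :=
  ⟨fun i => Sum.inr (Sum.inl (Sum.inl i)), fun _ _ h => by simpa using h⟩

lemma cVtx_apply {k r t : ℕ} (i : Fin (k - 5)) :
    cVtx k r t i = Sum.inr (Sum.inl (Sum.inl i)) := rfl

section
variable {k r t : ℕ}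

lemma Hgraph.adj_aVtx_aVtx : (Hgraph k r t).Adj (aVtx k r t 0) (aVtx k r t 1) := by
  simp [Hgraph, HRel, aVtx]

lemma Hgraph.adj_aVtx_bVtx (i j : Fin 2) : (Hgraph k r t).Adj (aVtx k r t i) (bVtx k r t j) := by
  simp [Hgraph, HRel, aVtx, bVtx]

lemma Hgraph.adj_bVtx_cVtx (i : Fin 2) (j : Fin (k - 5)) :
    (Hgraph k r t).Adj (bVtx k r t i) (cVtx k r t j) := by
  simp [Hgraph, HRel, bVtx, cVtx_apply]

lemma Hgraph.adj_cVtx_cVtx {i j : Fin (k - 5)} (hij : i ≠ j) :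
    (Hgraph k r t).Adj (cVtx k r t i) (cVtx k r t j) := by
  simp [Hgraph, HRel, cVtx_apply, hij]

-- `{b₁} ∪ C`, where `b₁ = bVtx k r t 0`
def bcClique (k r t : ℕ) : Finset (HVtx k r t) :=
  insert (bVtx k r t 0) (Finset.univ.map (cVtx k r t))

lemma isClique_bcClique : (Hgraph k r t).IsClique (bcClique k r t : Set (HVtx k r t)) := by
  intro x hx y hy hxy
  simp only [bcClique, Finset.coe_insert, Finset.coe_map,
    Finset.coe_univ, Set.image_univ, Set.mem_insert_iff, Set.mem_range] at hx hy
  rcases hx with rfl | ⟨i, rfl⟩ <;> rcases hy with rfl | ⟨j, rfl⟩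
  · exact absurd rfl hxy
  · exact Hgraph.adj_bVtx_cVtx _ _
  · exact (Hgraph.adj_bVtx_cVtx _ _).symm
  · exact Hgraph.adj_cVtx_cVtx (fun h => hxy (congrArg _ h))

lemma mem_bcClique {x : HVtx k r t} :
    x ∈ bcClique k r t ↔ x = bVtx k r t 0 ∨ ∃ i, x = cVtx k r t i := by
  simp [bcClique, eq_comm]

lemma aVtx_notMem_bcClique (i : Fin 2) : aVtx k r t i ∉ bcClique k r t := by
  simp [mem_bcClique, aVtx, bVtx, cVtx_apply]

lemma bVtx_one_notMem_bcClique : bVtx k r t 1 ∉ bcClique k r t := by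
  simp [mem_bcClique, bVtx, cVtx_apply]

lemma inr_inr_notMem_bcClique (x : Fin t × Fin (k - 4)) :
    (Sum.inr (Sum.inr x) : HVtx k r t) ∉ bcClique k r t := by
  simp [mem_bcClique, bVtx, cVtx_apply]

lemma card_bcClique : (bcClique k r t).card = k - 5 + 1 := by
  rw [bcClique, Finset.card_insert_of_notMem (by simp [bVtx, cVtx_apply]), Finset.card_map,
    Finset.card_univ, Fintype.card_fin]

lemma exists_isPath_aVtx_of_four_le {ℓ : ℕ} (h4 : 4 ≤ ℓ) (hℓ : ℓ ≤ k - 2) :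
    ∃ p : (Hgraph k r t).Walk (aVtx k r t 0) (aVtx k r t 1), p.IsPath ∧ p.length = ℓ ∧
      ∀ (α : Fin t) (j : Fin (k - 4)), (Sum.inr (Sum.inr (α, j)) : HVtx k r t) ∉ p.support := by
  have c₀ : Fin (k - 5) := ⟨0, by omega⟩
  have hc₀ : cVtx k r t c₀ ∈ bcClique k r t :=
    Finset.mem_insert_of_mem (Finset.mem_map_of_mem _ (Finset.mem_univ c₀))
  have hcard : ℓ - 3 < (bcClique k r t).card := by rw [card_bcClique]; omega
  obtain ⟨p, hp, hlen, hsupp⟩ := isClique_bcClique.exists_isPath_length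
    (Finset.mem_insert_self _ _) hc₀ (by simp [bVtx, cVtx_apply]) (by omega) hcard
  refine ⟨.cons (Hgraph.adj_aVtx_bVtx 0 0)
    ((p.concat (Hgraph.adj_bVtx_cVtx 1 _).symm).concat (Hgraph.adj_aVtx_bVtx 1 1).symm),
    (((hp.concat ?_ _).concat ?_ _).cons ?_), ?_, ?_⟩
  · exact fun h => bVtx_one_notMem_bcClique (hsupp _ h)
  · simp only [Walk.support_concat, List.mem_append, List.mem_singleton, not_or]
    exact ⟨fun h => aVtx_notMem_bcClique 1 (hsupp _ h), by simp [aVtx, bVtx]⟩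
  · simp only [Walk.support_concat, List.mem_append, List.mem_singleton, not_or]
    exact ⟨⟨fun h => aVtx_notMem_bcClique 0 (hsupp _ h), by simp [aVtx, bVtx]⟩, by simp [aVtx]⟩
  · simp [hlen]; omega
  · intro α j h
    simp only [Walk.support_cons, Walk.support_concat, List.mem_cons, List.mem_append] at h
    simp [aVtx, bVtx] at h
    exact inr_inr_notMem_bcClique _ (hsupp _ h)

end

theorem stmt_16_general (k r t : ℕ)
    (ℓ : ℕ) (h1 : 1 ≤ ℓ) (h2 : ℓ ≤ k - 2) (h3 : ℓ ≠ 3) :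
    ∃ p : (Hgraph k r t).Walk (aVtx k r t 0) (aVtx k r t 1),
      p.IsPath ∧ p.length = ℓ ∧
      -- the path stays inside Q = A ∪ B ∪ C ∪ D, i.e. avoids all the R_α
      ∀ (α : Fin t) (j : Fin (k - 4)),
        (Sum.inr (Sum.inr (α, j)) : HVtx k r t) ∉ p.support := by
  obtain rfl | rfl | h4 : ℓ = 1 ∨ ℓ = 2 ∨ 4 ≤ ℓ := by omega
  · refine ⟨Hgraph.adj_aVtx_aVtx.toWalk, .of_adj _, rfl, ?_⟩
    simp only [Adj.support_toWalk]
    simp [aVtx]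
  · refine ⟨.cons (Hgraph.adj_aVtx_bVtx 0 0) (Hgraph.adj_aVtx_bVtx 1 0).symm.toWalk,
      (Walk.IsPath.of_adj _).cons ?_, rfl, ?_⟩
    · simp only [Adj.support_toWalk]
      simp [aVtx, bVtx]
    · simp only [Walk.support_cons]
      simp [aVtx, bVtx]
  · exact exists_isPath_aVtx_of_four_le h4 h2

theorem stmt_16 (k r t : ℕ) (hk : 7 ≤ k) (hr : r ≤ k - 5)
    (ℓ : ℕ) (h1 : 1 ≤ ℓ) (h2 : ℓ ≤ k - 2) (h3 : ℓ ≠ 3) :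
    ∃ p : (Hgraph k r t).Walk (aVtx k r t 0) (aVtx k r t 1),
      p.IsPath ∧ p.length = ℓ ∧
      -- the path stays inside Q = A ∪ B ∪ C ∪ D, i.e. avoids all the R_α
      ∀ (α : Fin t) (j : Fin (k - 4)),
        (Sum.inr (Sum.inr (α, j)) : HVtx k r t) ∉ p.support :=
  stmt_16_general k r t ℓ h1 h2 h3
end
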